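/- Let R be a commutative ring whose Picard group has no 2-torsion, and let L be an invertible R-module. Define an orientation class of L to be an equivalence class of isomorphisms ε : L ≅ M ⊗ M for some invertible R-module M, where ε : L ≅ M ⊗ M and ε' : L ≅ N ⊗ N are equivalent if there is an isomorphism φ : M → N with (φ ⊗ φ) ∘ ε = ε'. Then if the set Or(L) of orientation classes of L is nonempty, the natural action of R^×/(R^×)^2 on Or(L) (a unit u acting by postcomposition with multiplication by u) is simply transitive; in particular any two orientation classes of L differ by a unique square class of units. -/
import Mathlib


open TensorProduct

/-- An `R`-module is invertible if it admits a tensor inverse (equivalently, it is a rank-one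
finitely generated projective module). -/
def IsInvertibleModule (R : Type) [CommRing R] (M : Type) [AddCommGroup M] [Module R M] :
    Prop :=
  ∃ N : ModuleCat.{0} R, Nonempty ((M ⊗[R] N) ≃ₗ[R] R)

/-- Multiplication by a unit `u : Rˣ`, as a linear automorphism of a module `M`. -/
noncomputable def smulUnitEquiv (R : Type) [CommRing R] (M : Type) [AddCommGroup M]
    [Module R M] (u : Rˣ) : M ≃ₗ[R] M :=
  LinearEquiv.ofLinear (LinearMap.lsmul R M (u : R)) (LinearMap.lsmul R M ((u⁻¹ : Rˣ) : R))
    (by ext; simp [smul_smul]) (by ext; simp [smul_smul])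

/-- Equivalence of orientations of `L`: two isomorphisms `ε : L ≅ M ⊗ M` and `ε' : L ≅ N ⊗ N`
are equivalent when there is an isomorphism `φ : M → N` with `(φ ⊗ φ) ∘ ε = ε'`. -/
def OrEquiv (R : Type) [CommRing R] {L M N : Type} [AddCommGroup L] [Module R L]
    [AddCommGroup M] [Module R M] [AddCommGroup N] [Module R N]
    (ε : L ≃ₗ[R] M ⊗[R] M) (ε' : L ≃ₗ[R] N ⊗[R] N) : Prop :=
  ∃ φ : M ≃ₗ[R] N, ∀ x : L, TensorProduct.congr φ φ (ε x) = ε' x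


section AuxLemmas

variable {R : Type} [CommRing R]

/-- If `Q` has a tensor inverse `Q'`, a scalar acting as zero on `Q` is zero. -/
lemma aux_smul_eq_zero {Q Q' : Type} [AddCommGroup Q] [Module R Q]
    [AddCommGroup Q'] [Module R Q'] (e : (Q ⊗[R] Q') ≃ₗ[R] R) {c : R}
    (h : ∀ x : Q, c • x = 0) : c = 0 := by
  have ht : ∀ t : Q ⊗[R] Q', c • t = 0 := by
    intro t
    induction t using TensorProduct.induction_on with
    | zero => simp
    | tmul q q' => rw [smul_tmul', h, zero_tmul]
    | add a b ha hb => rw [smul_add, ha, hb, add_zero]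
  have h2 : e (c • e.symm 1) = e 0 := by rw [ht]
  simpa using h2

lemma aux_smul_faithful {Q Q' : Type} [AddCommGroup Q] [Module R Q]
    [AddCommGroup Q'] [Module R Q'] (e : (Q ⊗[R] Q') ≃ₗ[R] R) {a b : R}
    (h : ∀ x : Q, a • x = b • x) : a = b := by
  have := aux_smul_eq_zero e (c := a - b) (fun x => by rw [sub_smul, h, sub_self])
  exact sub_eq_zero.mp this

/-- Every endomorphism of an invertible module is multiplication by a scalar. -/
lemma aux_exists_smul {Q Q' : Type} [AddCommGroup Q] [Module R Q]
    [AddCommGroup Q'] [Module R Q'] (e : (Q ⊗[R] Q') ≃ₗ[R] R) (f : Q →ₗ[R] Q) :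
    ∃ c : R, ∀ x : Q, f x = c • x := by
  set ee : (Q' ⊗[R] Q) ≃ₗ[R] R := (TensorProduct.comm R Q' Q).trans e with hee
  set μL : ((Q ⊗[R] Q') ⊗[R] Q) ≃ₗ[R] Q :=
    (TensorProduct.congr e (LinearEquiv.refl R Q)).trans (TensorProduct.lid R Q) with hμL
  set μR : ((Q ⊗[R] Q') ⊗[R] Q) ≃ₗ[R] Q :=
    (TensorProduct.assoc R Q Q' Q).trans
      ((TensorProduct.congr (LinearEquiv.refl R Q) ee).trans (TensorProduct.rid R Q)) with hμR
  set F : ((Q ⊗[R] Q') ⊗[R] Q) →ₗ[R] ((Q ⊗[R] Q') ⊗[R] Q) :=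
    LinearMap.rTensor Q (LinearMap.rTensor Q' f) with hF
  set c : R := e (LinearMap.rTensor Q' f (e.symm 1)) with hc
  have hμL_apply : ∀ (t : Q ⊗[R] Q') (x : Q), μL (t ⊗ₜ[R] x) = e t • x := by
    intro t x
    simp [hμL, TensorProduct.congr]
  have hF_apply : ∀ (t : Q ⊗[R] Q') (x : Q),
      F (t ⊗ₜ[R] x) = (LinearMap.rTensor Q' f t) ⊗ₜ[R] x := by
    intro t x
    simp [hF]
  have hμLsymm : ∀ x : Q, μL.symm x = (e.symm 1) ⊗ₜ[R] x := by
    intro x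
    rw [LinearEquiv.symm_apply_eq, hμL_apply]
    simp
  have claimA : ∀ x : Q, μL (F (μL.symm x)) = c • x := by
    intro x
    rw [hμLsymm, hF_apply, hμL_apply, hc]
  have claimB : ∀ t, μR (F t) = f (μR t) := by
    intro t
    induction t using TensorProduct.induction_on with
    | zero => simp
    | tmul a x =>
      induction a using TensorProduct.induction_on with
      | zero => simp [hF_apply]
      | tmul q q' =>
        rw [hF_apply]
        simp [hμR, hee, map_smul]
      | add a b ha hb =>
        rw [add_tmul, map_add, map_add, ha, hb, ← map_add, ← map_add, ← add_tmul]
    | add a b ha hb =>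
      rw [map_add, map_add, ha, hb, ← map_add, ← map_add]
  refine ⟨c, fun x => ?_⟩
  have h1 : f x = μR (F (μR.symm x)) := by rw [claimB, μR.apply_symm_apply]
  have h2 : F (μR.symm x) = μL.symm (c • μL (μR.symm x)) := by
    rw [LinearEquiv.eq_symm_apply]
    have := claimA (μL (μR.symm x))
    rwa [μL.symm_apply_apply] at this
  rw [h1, h2, map_smul, map_smul, μL.symm_apply_apply, μR.apply_symm_apply]

/-- Every automorphism of an invertible module is multiplication by a unit. -/
lemma aux_equiv_exists_unit {Q Q' : Type} [AddCommGroup Q] [Module R Q]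
    [AddCommGroup Q'] [Module R Q'] (e : (Q ⊗[R] Q') ≃ₗ[R] R) (φ : Q ≃ₗ[R] Q) :
    ∃ u : Rˣ, ∀ x : Q, φ x = (u : R) • x := by
  obtain ⟨c, hc⟩ := aux_exists_smul e φ.toLinearMap
  obtain ⟨d, hd⟩ := aux_exists_smul e φ.symm.toLinearMap
  have hc' : ∀ x : Q, φ x = c • x := fun x => by simpa using hc x
  have hd' : ∀ x : Q, φ.symm x = d • x := fun x => by simpa using hd x
  have hcd : c * d = 1 := by
    apply aux_smul_faithful e
    intro x
    rw [mul_smul, one_smul, ← hd', ← hc', φ.apply_symm_apply]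
  exact ⟨⟨c, d, hcd, by rw [mul_comm]; exact hcd⟩, hc'⟩

/-- Tensor inverse for a tensor product of invertible modules. -/
noncomputable def auxTensorEquiv {A B A' B' : Type}
    [AddCommGroup A] [Module R A] [AddCommGroup B] [Module R B]
    [AddCommGroup A'] [Module R A'] [AddCommGroup B'] [Module R B']
    (eA : (A ⊗[R] A') ≃ₗ[R] R) (eB : (B ⊗[R] B') ≃ₗ[R] R) :
    ((A ⊗[R] B) ⊗[R] (A' ⊗[R] B')) ≃ₗ[R] R :=
  (TensorProduct.tensorTensorTensorComm R A B A' B').trans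
    ((TensorProduct.congr eA eB).trans (TensorProduct.lid R R))

lemma aux_congr_smul {M : Type} [AddCommGroup M] [Module R M] (w : R)
    (φ : M ≃ₗ[R] M) (hφ : ∀ m : M, φ m = w • m) :
    ∀ t : M ⊗[R] M, TensorProduct.congr φ φ t = (w * w) • t := by
  intro t
  induction t using TensorProduct.induction_on with
  | zero => simp
  | tmul m m' =>
    simp only [TensorProduct.congr_tmul, hφ, tmul_smul, smul_tmul', smul_smul]
  | add a b ha hb => rw [map_add, ha, hb, smul_add]

lemma aux_smulUnitEquiv_apply {M : Type} [AddCommGroup M] [Module R M] (u : Rˣ) (x : M) :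
    smulUnitEquiv R M u x = (u : R) • x := rfl

end AuxLemmas


/-- Let `R` be a commutative ring whose Picard group has no 2-torsion (every invertible module
whose tensor square is trivial is itself trivial), and let `L` be an invertible `R`-module.
Then the action of `R^×/(R^×)²` on orientation classes of `L` (a unit `u` acting on
`ε : L ≅ M ⊗ M` by postcomposition with multiplication by `u`) is simply transitive:
(1) any two orientations of `L` differ by the action of some unit (transitivity);
(2) two units move a given orientation to equivalent orientations iff they differ by a square
    (freeness modulo squares, i.e. well-definedness and freeness of the action of
    `R^×/(R^×)²`). -/
theorem orientation_classes_torsor (R : Type) [CommRing R]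
    (hPic : ∀ (M : Type) [AddCommGroup M] [Module R M], IsInvertibleModule R M →
      Nonempty ((M ⊗[R] M) ≃ₗ[R] R) → Nonempty (M ≃ₗ[R] R))
    (L : Type) [AddCommGroup L] [Module R L] (hL : IsInvertibleModule R L) :
    (∀ (M N : Type) [AddCommGroup M] [Module R M] [AddCommGroup N] [Module R N],
      IsInvertibleModule R M → IsInvertibleModule R N →
      ∀ (ε : L ≃ₗ[R] M ⊗[R] M) (ε' : L ≃ₗ[R] N ⊗[R] N),
        ∃ u : Rˣ, OrEquiv R (ε.trans (smulUnitEquiv R (M ⊗[R] M) u)) ε') ∧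
    (∀ (M : Type) [AddCommGroup M] [Module R M], IsInvertibleModule R M →
      ∀ (ε : L ≃ₗ[R] M ⊗[R] M) (u v : Rˣ),
        (OrEquiv R (ε.trans (smulUnitEquiv R (M ⊗[R] M) u))
            (ε.trans (smulUnitEquiv R (M ⊗[R] M) v)) ↔
          ∃ w : Rˣ, u = v * w * w)) := by
  constructor
  · -- transitivity
    intro M N _ _ _ _ hM hN ε ε'
    obtain ⟨M', ⟨eM⟩⟩ := hM
    obtain ⟨N', ⟨eN⟩⟩ := hN
    -- P := M ⊗ N' has square isomorphic to R
    have hPinv : IsInvertibleModule R (M ⊗[R] N') := by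
      refine ⟨ModuleCat.of R ((M' : Type) ⊗[R] (N : Type)), ⟨?_⟩⟩
      exact (TensorProduct.tensorTensorTensorComm R M N' M' N).trans
        ((TensorProduct.congr eM ((TensorProduct.comm R N' N).trans eN)).trans
          (TensorProduct.lid R R))
    have d : (M ⊗[R] M) ≃ₗ[R] (N ⊗[R] N) := ε.symm.trans ε'
    have hPsq : Nonempty (((M ⊗[R] N') ⊗[R] (M ⊗[R] N')) ≃ₗ[R] R) := by
      exact ⟨(TensorProduct.tensorTensorTensorComm R M N' M N').trans
        ((TensorProduct.congr d (LinearEquiv.refl R ((N' : Type) ⊗[R] (N' : Type)))).trans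
          ((TensorProduct.tensorTensorTensorComm R N N N' N').trans
            ((TensorProduct.congr eN eN).trans (TensorProduct.lid R R))))⟩
    obtain ⟨ψ₀⟩ := hPic (M ⊗[R] N') hPinv hPsq
    -- build ψ : M ≃ N
    have eNN : (((N' : Type)) ⊗[R] N) ≃ₗ[R] R := (TensorProduct.comm R N' N).trans eN
    have ψ : M ≃ₗ[R] N :=
      (TensorProduct.rid R M).symm.trans
        ((TensorProduct.congr (LinearEquiv.refl R M) eNN.symm).trans
          ((TensorProduct.assoc R M N' N).symm.trans
            ((TensorProduct.congr ψ₀ (LinearEquiv.refl R N)).trans (TensorProduct.lid R N))))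
    -- automorphism of N ⊗ N
    set α : (N ⊗[R] N) ≃ₗ[R] (N ⊗[R] N) :=
      ((ε.trans (TensorProduct.congr ψ ψ)).symm).trans ε' with hα
    obtain ⟨u, hu⟩ := aux_equiv_exists_unit (auxTensorEquiv eN eN) α
    refine ⟨u, ψ, fun x => ?_⟩
    have h1 := hu (TensorProduct.congr ψ ψ (ε x))
    have h2 : α (TensorProduct.congr ψ ψ (ε x)) = ε' x := by
      rw [hα]
      simp only [LinearEquiv.trans_apply]
      congr 1
      rw [LinearEquiv.symm_apply_eq, LinearEquiv.trans_apply]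
    rw [LinearEquiv.trans_apply, aux_smulUnitEquiv_apply, map_smul, ← h1, h2]
  · -- freeness
    intro M _ _ hM ε u v
    obtain ⟨M', ⟨eM⟩⟩ := hM
    constructor
    · rintro ⟨φ, hφ⟩
      obtain ⟨w, hw⟩ := aux_equiv_exists_unit eM φ
      have hcongr := aux_congr_smul (R := R) (w : R) φ hw
      have key : ∀ t : M ⊗[R] M, ((u : R) * ((w : R) * (w : R))) • t = (v : R) • t := by
        intro t
        obtain ⟨x, hx⟩ := ε.surjective t
        have := hφ x
        rw [LinearEquiv.trans_apply, LinearEquiv.trans_apply,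
          aux_smulUnitEquiv_apply, aux_smulUnitEquiv_apply, map_smul, hcongr, hx] at this
        rw [mul_smul, this]
      have hR : (u : R) * ((w : R) * (w : R)) = (v : R) :=
        aux_smul_faithful (auxTensorEquiv eM eM) key
      have hunits : u * (w * w) = v := Units.ext (by push_cast; exact hR)
      exact ⟨w⁻¹, by rw [← hunits]; group⟩
    · rintro ⟨w, hw⟩
      refine ⟨smulUnitEquiv R M w⁻¹, fun x => ?_⟩
      have hcongr := aux_congr_smul (R := R) ((w⁻¹ : Rˣ) : R) (smulUnitEquiv R M w⁻¹)
        (fun m => rfl)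
      rw [LinearEquiv.trans_apply, LinearEquiv.trans_apply,
        aux_smulUnitEquiv_apply, aux_smulUnitEquiv_apply, map_smul, hcongr,
        smul_smul]
      congr 1
      have hu : u * (w⁻¹ * w⁻¹) = v := by rw [hw]; group
      rw [← Units.val_mul, ← Units.val_mul, hu]
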